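/- Suppose Ω is a Cantor group with identity ω_e that admits a minimal ℤ^d action by translations {T^n}_{n∈ℤ^d}, and f : Ω → ℝ is continuous. Define φ : Ω → ℓ∞(ℤ^d) by φ(ω) = F(ω) := (f(T^n ω))_{n∈ℤ^d}. Then φ is continuous, its image is exactly hull(F(ω_e)), φ satisfies F(ω_1) · F(ω_2) = F(ω_1 + ω_2) where · denotes the topological group structure on hull(F(ω_e)) with identity F(ω_e) (the one for which m ↦ S_m F(ω_e) is a homomorphism), and the kernel N = {ω ∈ Ω : F(ω) = F(ω_e)} is a closed subgroup of Ω with F(ω_1) = F(ω_2) if and only if ω_1 − ω_2 ∈ N. Hence hull(F(ω_e)) is isomorphic as a topological group to the quotient Ω/N. -/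

import Mathlib

/-!
Write `s n = ∑ j, n j • α j`. Then `F` is continuous and intertwines the two actions,
`Sh m (F ω) = F (ω - s m)`. Since the orbit `range s` is dense, any identity between continuous
maps that holds along the orbit holds everywhere. This gives the hull as the image of `F`, shows
that the fibres of `F` are translation invariant (so they are the cosets of `N`), and turns
the product rule for shifts into `F ω₁ ⋆ F ω₂ = F (ω₁ + ω₂)`. Finally, the induced continuous
bijection from the compact space `Ω ⧸ N` to the Hausdorff hull is a homeomorphism.
-/

open Filter Topology

/-- Translation action of `ℤ^d` on `ℓ^∞(ℤ^d)`: `(S_m V)(n) = V(n - m)`. -/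
noncomputable def Sh {d : ℕ} (m : Fin d → ℤ) (V : lp (fun _ : Fin d → ℤ => ℝ) ⊤) :
    lp (fun _ : Fin d → ℤ => ℝ) ⊤ :=
  ⟨fun n => V (n - m), by
    show Memℓp (fun n : Fin d → ℤ => V (n - m)) ⊤
    have h : Memℓp (fun n : Fin d → ℤ => V n) ⊤ := lp.memℓp V
    rw [memℓp_infty_iff] at h ⊢
    have hsurj : Function.Surjective (fun n : Fin d → ℤ => n - m) :=
      fun y => ⟨y + m, by simp⟩
    have heq : (Set.range fun n : Fin d → ℤ => ‖V (n - m)‖) =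
        Set.range fun n : Fin d → ℤ => ‖V n‖ := by
      have h2 : (fun n : Fin d → ℤ => ‖V (n - m)‖) =
          (fun n => ‖V n‖) ∘ (fun n : Fin d → ℤ => n - m) := rfl
      rw [h2, Set.range_comp, hsurj.range_eq, Set.image_univ]
    rwa [heq]⟩

/-- `V ∈ ℓ^∞(ℤ^d)` is periodic if its orbit under translations is finite. -/
def PeriodicSeq {d : ℕ} (V : lp (fun _ : Fin d → ℤ => ℝ) ⊤) : Prop :=
  (Set.range fun m : Fin d → ℤ => Sh m V).Finite

/-- `V ∈ ℓ^∞(ℤ^d)` is limit-periodic if it lies in the `ℓ^∞`-closure of the periodic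
elements. -/
def LimitPeriodicSeq {d : ℕ} (V : lp (fun _ : Fin d → ℤ => ℝ) ⊤) : Prop :=
  V ∈ closure {W : lp (fun _ : Fin d → ℤ => ℝ) ⊤ | PeriodicSeq W}

/-- The hull of `V ∈ ℓ^∞(ℤ^d)`: the closure of its translation orbit. -/
noncomputable def hullSet {d : ℕ} (V : lp (fun _ : Fin d → ℤ => ℝ) ⊤) :
    Set (lp (fun _ : Fin d → ℤ => ℝ) ⊤) :=
  closure (Set.range fun m : Fin d → ℤ => Sh m V)

/-- Continuity comes from that of `ω ↦ f (ω + ·)` into `C(Ω, ℝ)` with the sup metric, which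
dominates the `ℓ^∞` distance of the samples. -/
theorem continuous_of_apply_eq_apply_add {Ω ι : Type*} [TopologicalSpace Ω] [Add Ω]
    [ContinuousAdd Ω] [CompactSpace Ω] (f : C(Ω, ℝ)) (s : ι → Ω) {F : Ω → lp (fun _ : ι => ℝ) ⊤}
    (hF : ∀ ω n, F ω n = f (ω + s n)) : Continuous F := by
  let translates : C(Ω, C(Ω, ℝ)) := ContinuousMap.curry ⟨fun p => f (p.1 + p.2), by fun_prop⟩
  have hdist : ∀ ω ω', dist (F ω) (F ω') ≤ dist (translates ω) (translates ω') := by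
    intro ω ω'
    rw [dist_eq_norm]
    refine lp.norm_le_of_forall_le dist_nonneg fun n => ?_
    rw [lp.coeFn_sub, Pi.sub_apply, hF, hF, ← dist_eq_norm]
    exact (translates ω).dist_apply_le_dist (g := translates ω') (s n)
  exact Metric.continuous_iff'.2 fun ω ε hε =>
    (Metric.continuous_iff'.1 translates.continuous ω ε hε).mono fun ω' h =>
      (hdist ω' ω).trans_lt h

theorem exists_addSubgroup_apply_eq_iff_sub_mem {G X : Type*} [AddGroup G] {F : G → X}
    (hF : ∀ {a b}, F a = F b → ∀ c, F (a + c) = F (b + c)) :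
    ∃ N : AddSubgroup G, (N : Set G) = {g | F g = F 0} ∧ ∀ a b, F a = F b ↔ a - b ∈ N := by
  have apply_sub : ∀ {a b}, F a = F b → F (a - b) = F 0 := fun {a b} h => by
    simpa [sub_eq_add_neg] using hF h (-b)
  refine ⟨AddSubgroup.ofSub {g | F g = F 0} ⟨0, rfl⟩ fun x hx y hy => by
      change F (x + -y) = F 0
      rw [← sub_eq_add_neg]
      exact apply_sub (hx.trans hy.symm),
    rfl, fun a b => ⟨apply_sub, fun h => ?_⟩⟩
  simpa using hF h b

theorem exists_homeomorph_quotient_of_fibers {Ω Y : Type*} [AddCommGroup Ω] [TopologicalSpace Ω]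
    [CompactSpace Ω] [TopologicalSpace Y] [T2Space Y] (N : AddSubgroup Ω) {g : Ω → Y}
    (hg : Continuous g) (hsurj : Function.Surjective g) (hfib : ∀ a b, g a = g b ↔ a - b ∈ N) :
    ∃ ψ : (Ω ⧸ N) ≃ₜ Y, ∀ ω : Ω, ψ ω = g ω := by
  have hrel : ∀ a b, QuotientAddGroup.leftRel N a b ↔ g a = g b := fun a b => by
    rw [QuotientAddGroup.leftRel_apply, hfib, ← neg_sub, neg_mem_iff, neg_add_eq_sub]
  let e : Ω ⧸ N → Y := Quotient.lift g fun a b h => (hrel a b).1 h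
  have he : Function.Bijective e := by
    refine ⟨fun x y => Quotient.inductionOn₂ x y fun a b h => Quotient.sound ((hrel a b).2 h), ?_⟩
    exact fun y => (hsurj y).elim fun ω hω => ⟨ω, hω⟩
  exact ⟨Continuous.homeoOfEquivCompactToT2 (f := Equiv.ofBijective e he)
    (hg.quotient_lift _), fun _ => rfl⟩

theorem sh_eq_of_apply_eq_apply_add {d : ℕ} {Ω : Type*} [AddCommGroup Ω] {f : Ω → ℝ}
    (s : (Fin d → ℤ) →+ Ω) {F : Ω → lp (fun _ : Fin d → ℤ => ℝ) ⊤}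
    (hF : ∀ ω n, F ω n = f (ω + s n)) (m : Fin d → ℤ) (ω : Ω) :
    Sh m (F ω) = F (ω - s m) := by
  ext n
  change F ω (n - m) = F (ω - s m) n
  rw [hF, hF, map_sub]
  congr 1
  abel

section Equivariant

variable {d : ℕ} {Ω : Type*} [AddCommGroup Ω] {s : (Fin d → ℤ) →+ Ω}
  {F : Ω → lp (fun _ : Fin d → ℤ => ℝ) ⊤}

theorem apply_add_eq_sh (hSh : ∀ m ω, Sh m (F ω) = F (ω - s m)) (ω : Ω) (n : Fin d → ℤ) :
    F (ω + s n) = Sh (-n) (F ω) := by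
  rw [hSh, map_neg, sub_neg_eq_add]

theorem apply_map_eq_sh (hSh : ∀ m ω, Sh m (F ω) = F (ω - s m)) (n : Fin d → ℤ) :
    F (s n) = Sh (-n) (F 0) := by
  rw [← apply_add_eq_sh hSh, zero_add]

variable [TopologicalSpace Ω]

theorem apply_mem_hullSet (hc : Continuous F) (hs : DenseRange s)
    (hSh : ∀ m ω, Sh m (F ω) = F (ω - s m)) (ω : Ω) : F ω ∈ hullSet (F 0) := by
  refine closure_mono ?_ (map_mem_closure hc (hs ω) fun _ => Set.mem_image_of_mem F)
  rintro _ ⟨_, ⟨n, rfl⟩, rfl⟩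
  exact ⟨-n, (apply_map_eq_sh hSh n).symm⟩

theorem range_eq_hullSet [CompactSpace Ω] (hc : Continuous F) (hs : DenseRange s)
    (hSh : ∀ m ω, Sh m (F ω) = F (ω - s m)) : Set.range F = hullSet (F 0) := by
  refine (Set.range_subset_iff.2 (apply_mem_hullSet hc hs hSh)).antisymm ?_
  refine closure_minimal ?_ (isCompact_range hc).isClosed
  rintro _ ⟨m, rfl⟩
  exact ⟨0 - s m, (hSh m 0).symm⟩

theorem apply_add_eq_of_apply_eq [ContinuousAdd Ω] (hc : Continuous F) (hs : DenseRange s)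
    (hSh : ∀ m ω, Sh m (F ω) = F (ω - s m)) {a b : Ω} (h : F a = F b) (c : Ω) :
    F (a + c) = F (b + c) := by
  refine congrFun (hs.equalizer (g := fun c => F (a + c)) (h := fun c => F (b + c))
    (by fun_prop) (by fun_prop) (funext fun n => ?_)) c
  simp only [Function.comp_apply, apply_add_eq_sh hSh, h]

theorem mul_mk_apply_eq_mk_apply_add [ContinuousAdd Ω] (hc : Continuous F) (hs : DenseRange s)
    (hSh : ∀ m ω, Sh m (F ω) = F (ω - s m)) {mul : hullSet (F 0) → hullSet (F 0) → hullSet (F 0)}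
    (hmul_cont : Continuous fun q : hullSet (F 0) × hullSet (F 0) => mul q.1 q.2)
    (hmul : ∀ (m k : Fin d → ℤ) (hm : Sh m (F 0) ∈ hullSet (F 0))
      (hk : Sh k (F 0) ∈ hullSet (F 0)) (hmk : Sh (m + k) (F 0) ∈ hullSet (F 0)),
      mul ⟨Sh m (F 0), hm⟩ ⟨Sh k (F 0), hk⟩ = ⟨Sh (m + k) (F 0), hmk⟩)
    (ω₁ ω₂ : Ω) (h₁ : F ω₁ ∈ hullSet (F 0)) (h₂ : F ω₂ ∈ hullSet (F 0))
    (h₃ : F (ω₁ + ω₂) ∈ hullSet (F 0)) :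
    mul ⟨F ω₁, h₁⟩ ⟨F ω₂, h₂⟩ = ⟨F (ω₁ + ω₂), h₃⟩ := by
  have mem := apply_mem_hullSet hc hs hSh
  have hF : Continuous fun ω => (⟨F ω, mem ω⟩ : hullSet (F 0)) := hc.subtype_mk mem
  have orbit_mk : ∀ n, (⟨F (s n), mem (s n)⟩ : hullSet (F 0)) =
      ⟨Sh (-n) (F 0), apply_map_eq_sh hSh n ▸ mem (s n)⟩ := fun n =>
    Subtype.ext (apply_map_eq_sh hSh n)
  refine congrFun ((hs.prodMap hs).equalizer
    (g := fun p : Ω × Ω => mul ⟨F p.1, mem p.1⟩ ⟨F p.2, mem p.2⟩)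
    (h := fun p : Ω × Ω => ⟨F (p.1 + p.2), mem (p.1 + p.2)⟩)
    (hmul_cont.comp ((hF.comp continuous_fst).prodMk (hF.comp continuous_snd)))
    (hF.comp continuous_add) (funext fun ⟨m, k⟩ => ?_)) (ω₁, ω₂)
  simp only [Function.comp_apply, Prod.map_apply, ← map_add]
  rw [orbit_mk, orbit_mk, orbit_mk, hmul]
  · simp only [neg_add]
  · rw [← neg_add, ← apply_map_eq_sh hSh]
    exact mem _

end Equivariant

theorem hull_is_quotient_group_general (d : ℕ) (Ω : Type) [TopologicalSpace Ω] [AddCommGroup Ω]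
    [IsTopologicalAddGroup Ω] [CompactSpace Ω]
    (α : Fin d → Ω)
    (hmin : ∀ ω : Ω, Dense (Set.range fun n : Fin d → ℤ => ω + ∑ j, n j • α j))
    (f : C(Ω, ℝ)) (F : Ω → lp (fun _ : Fin d → ℤ => ℝ) ⊤)
    (hF : ∀ (ω : Ω) (n : Fin d → ℤ), F ω n = f (ω + ∑ j, n j • α j)) :
    Continuous F ∧
    Set.range F = hullSet (F 0) ∧
    IsClosed {ω : Ω | F ω = F 0} ∧
    ∃ N : AddSubgroup Ω, (N : Set Ω) = {ω : Ω | F ω = F 0} ∧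
      (∀ ω₁ ω₂ : Ω, F ω₁ = F ω₂ ↔ ω₁ - ω₂ ∈ N) ∧
      -- for the topological group structure on the hull for which `m ↦ S_m F(0)` is a
      -- homomorphism:
      ∀ mul : hullSet (F 0) → hullSet (F 0) → hullSet (F 0),
        Continuous (fun q : hullSet (F 0) × hullSet (F 0) => mul q.1 q.2) →
        (∀ (m k : Fin d → ℤ) (hm : Sh m (F 0) ∈ hullSet (F 0))
          (hk : Sh k (F 0) ∈ hullSet (F 0)) (hmk : Sh (m + k) (F 0) ∈ hullSet (F 0)),
          mul ⟨Sh m (F 0), hm⟩ ⟨Sh k (F 0), hk⟩ = ⟨Sh (m + k) (F 0), hmk⟩) →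
        -- `F(ω₁) ⋆ F(ω₂) = F(ω₁ + ω₂)`
        (∀ (ω₁ ω₂ : Ω) (h₁ : F ω₁ ∈ hullSet (F 0)) (h₂ : F ω₂ ∈ hullSet (F 0))
          (h₃ : F (ω₁ + ω₂) ∈ hullSet (F 0)),
          mul ⟨F ω₁, h₁⟩ ⟨F ω₂, h₂⟩ = ⟨F (ω₁ + ω₂), h₃⟩) ∧
        -- `hull(F 0) ≅ Ω ⧸ N` as topological groups
        ∃ ψ : (Ω ⧸ N) ≃ₜ hullSet (F 0),
          (∀ ω : Ω, ((ψ (QuotientAddGroup.mk ω) : hullSet (F 0)) :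
              lp (fun _ : Fin d → ℤ => ℝ) ⊤) = F ω) ∧
          (∀ a b : Ω ⧸ N, ψ (a + b) = mul (ψ a) (ψ b)) := by
  let s : (Fin d → ℤ) →+ Ω := (Fintype.linearCombination ℤ α).toAddMonoidHom
  have hs : DenseRange s := by
    have h := hmin 0
    simp only [zero_add] at h
    exact h
  have hc : Continuous F := continuous_of_apply_eq_apply_add f s hF
  have hSh := sh_eq_of_apply_eq_apply_add s hF
  have mem := apply_mem_hullSet hc hs hSh
  have hrange := range_eq_hullSet hc hs hSh
  obtain ⟨N, hN, hfib⟩ := exists_addSubgroup_apply_eq_iff_sub_mem (F := F)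
    (apply_add_eq_of_apply_eq hc hs hSh)
  refine ⟨hc, hrange, isClosed_eq hc continuous_const, N, hN, hfib, fun mul hmul_cont hmul => ?_⟩
  have hmulF := mul_mk_apply_eq_mk_apply_add hc hs hSh hmul_cont hmul
  obtain ⟨ψ, hψ⟩ := exists_homeomorph_quotient_of_fibers N (hc.codRestrict mem)
    ((Set.surjective_codRestrict mem).2 hrange)
    (fun a b => Subtype.ext_iff.trans (hfib a b))
  refine ⟨hmulF, ψ, fun ω => congrArg Subtype.val (hψ ω), ?_⟩
  intro x y
  obtain ⟨a, rfl⟩ := QuotientAddGroup.mk_surjective x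
  obtain ⟨b, rfl⟩ := QuotientAddGroup.mk_surjective y
  rw [← QuotientAddGroup.mk_add, hψ, hψ, hψ]
  exact (hmulF a b _ _ _).symm

/-- Let `Ω` be a Cantor group with a minimal `ℤ^d` action by
translations and `f : Ω → ℝ` continuous; let `F(ω) = (f(T^n ω))_n ∈ ℓ^∞(ℤ^d)`. Then `F`
is continuous, its image is exactly `hull(F(0))`, `F` intertwines addition on `Ω` with the
group structure on the hull (the one for which `m ↦ S_m F(0)` is a homomorphism), the
kernel `N = {ω : F ω = F 0}` is a closed subgroup, `F ω₁ = F ω₂ ↔ ω₁ − ω₂ ∈ N`, and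
`hull(F(0))` is isomorphic as a topological group to `Ω ⧸ N`. -/
theorem hull_is_quotient_group (d : ℕ) (Ω : Type) [TopologicalSpace Ω] [AddCommGroup Ω]
    [IsTopologicalAddGroup Ω] [CompactSpace Ω] [TotallyDisconnectedSpace Ω]
    [TopologicalSpace.MetrizableSpace Ω] [Infinite Ω]
    (α : Fin d → Ω)
    (hmin : ∀ ω : Ω, Dense (Set.range fun n : Fin d → ℤ => ω + ∑ j, n j • α j))
    (f : C(Ω, ℝ)) (F : Ω → lp (fun _ : Fin d → ℤ => ℝ) ⊤)
    (hF : ∀ (ω : Ω) (n : Fin d → ℤ), F ω n = f (ω + ∑ j, n j • α j)) :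
    Continuous F ∧
    Set.range F = hullSet (F 0) ∧
    IsClosed {ω : Ω | F ω = F 0} ∧
    ∃ N : AddSubgroup Ω, (N : Set Ω) = {ω : Ω | F ω = F 0} ∧
      (∀ ω₁ ω₂ : Ω, F ω₁ = F ω₂ ↔ ω₁ - ω₂ ∈ N) ∧
      -- for the topological group structure on the hull for which `m ↦ S_m F(0)` is a
      -- homomorphism:
      ∀ mul : hullSet (F 0) → hullSet (F 0) → hullSet (F 0),
        Continuous (fun q : hullSet (F 0) × hullSet (F 0) => mul q.1 q.2) →
        (∀ (m k : Fin d → ℤ) (hm : Sh m (F 0) ∈ hullSet (F 0))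
          (hk : Sh k (F 0) ∈ hullSet (F 0)) (hmk : Sh (m + k) (F 0) ∈ hullSet (F 0)),
          mul ⟨Sh m (F 0), hm⟩ ⟨Sh k (F 0), hk⟩ = ⟨Sh (m + k) (F 0), hmk⟩) →
        -- `F(ω₁) ⋆ F(ω₂) = F(ω₁ + ω₂)`
        (∀ (ω₁ ω₂ : Ω) (h₁ : F ω₁ ∈ hullSet (F 0)) (h₂ : F ω₂ ∈ hullSet (F 0))
          (h₃ : F (ω₁ + ω₂) ∈ hullSet (F 0)),
          mul ⟨F ω₁, h₁⟩ ⟨F ω₂, h₂⟩ = ⟨F (ω₁ + ω₂), h₃⟩) ∧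
        -- `hull(F 0) ≅ Ω ⧸ N` as topological groups
        ∃ ψ : (Ω ⧸ N) ≃ₜ hullSet (F 0),
          (∀ ω : Ω, ((ψ (QuotientAddGroup.mk ω) : hullSet (F 0)) :
              lp (fun _ : Fin d → ℤ => ℝ) ⊤) = F ω) ∧
          (∀ a b : Ω ⧸ N, ψ (a + b) = mul (ψ a) (ψ b)) :=
  hull_is_quotient_group_general d Ω α hmin f F hF
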